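/- Let p ∈ (1,∞) and let x₀ ∈ W^{1,p}. If x is a solution of the delay system ẋ(t) = f(x_t) with initial condition x₀ on [0,b) for some 0 < b ≤ ∞, then x_t ∈ W^{1,p} for every t ∈ [0,b), and the map t ↦ x_t is continuous from [0,b) into (W^{1,p}, ‖·‖_{W^{1,p}}). -/

import Mathlib

open Set MeasureTheory Filter Topology
open scoped ENNReal NNReal

noncomputable section

abbrev Vec (n : ℕ) := EuclideanSpace ℝ (Fin n)

variable {n : ℕ}

/-- The segment `x_t` of a history `x : ℝ → ℝⁿ`, i.e. `x_t(s) = x(t+s)`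
(only its values on `[-r,0]` are relevant). -/
def seg (r : ℝ) (x : ℝ → Vec n) (t : ℝ) : ℝ → Vec n := fun s => x (t + s)

/-- Sup norm over `[-r,0]`. -/
def supN (r : ℝ) (g : ℝ → Vec n) : ℝ := sSup ((fun s => ‖g s‖) '' Icc (-r) 0)

/-- Membership in `C⁰ = C([-r,0];ℝⁿ)`. -/
def MemC0 (r : ℝ) (g : ℝ → Vec n) : Prop := ContinuousOn g (Icc (-r) 0)

/-- `f` vanishes at `0`, depends only on the values of its argument on `[-r,0]`,
and is Lipschitz on bounded subsets of `C⁰` with a nondecreasing (nonnegative)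
modulus `L`. -/
def GoodRHS (r : ℝ) (f : (ℝ → Vec n) → Vec n) (L : ℝ → ℝ) : Prop :=
  f 0 = 0 ∧
  (∀ x y : ℝ → Vec n, EqOn x y (Icc (-r) 0) → f x = f y) ∧
  Monotone L ∧ (∀ s : ℝ, 0 ≤ L s) ∧
  ∀ R : ℝ, ∀ x y : ℝ → Vec n, MemC0 r x → MemC0 r y → supN r x ≤ R → supN r y ≤ R →
    ‖f x - f y‖ ≤ L R * supN r (x - y)

/-- `x : ℝ → ℝⁿ` is a solution on `[-r, b)` (with `b ∈ (0,∞]` an extended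
nonnegative real) of the delay system `ẋ(t) = f(x_t)` with initial condition `x0`:
it is continuous on `[-r,b)`, coincides with `x0` on `[-r,0]`, and satisfies the
integral equation `x(t) = x(0) + ∫₀ᵗ f(x_s) ds` on `[0,b)`. -/
def IsSol (r : ℝ) (f : (ℝ → Vec n) → Vec n) (x0 x : ℝ → Vec n) (b : ℝ≥0∞) : Prop :=
  ContinuousOn x {t : ℝ | -r ≤ t ∧ ENNReal.ofReal t < b} ∧
  EqOn x x0 (Icc (-r) 0) ∧
  ∀ t : ℝ, 0 ≤ t → ENNReal.ofReal t < b → x t = x 0 + ∫ s in (0:ℝ)..t, f (seg r x s)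

/-- Class `KL` functions `σ : [0,∞)×[0,∞) → [0,∞)`. -/
def ClassKL (σ : ℝ → ℝ → ℝ) : Prop :=
  (∀ s t : ℝ, 0 ≤ s → 0 ≤ t → 0 ≤ σ s t) ∧
  (∀ t : ℝ, 0 ≤ t →
    ContinuousOn (fun s => σ s t) (Ici 0) ∧ StrictMonoOn (fun s => σ s t) (Ici 0) ∧
      σ 0 t = 0) ∧
  (∀ s : ℝ, 0 ≤ s →
    AntitoneOn (fun t => σ s t) (Ici 0) ∧ Tendsto (fun t => σ s t) atTop (nhds 0))

/-- Class `K∞` functions `a : [0,∞) → [0,∞)`. -/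
def ClassKInf (a : ℝ → ℝ) : Prop :=
  (∀ s : ℝ, 0 ≤ s → 0 ≤ a s) ∧ ContinuousOn a (Ici 0) ∧ StrictMonoOn a (Ici 0) ∧
  a 0 = 0 ∧ Tendsto a atTop atTop

/-- The set of Hölder difference quotients `‖g t - g s‖ / |t-s|^α` over a set `S`. -/
def hRatios (α : ℝ) (S : Set ℝ) (g : ℝ → Vec n) : Set ℝ :=
  {c | ∃ t ∈ S, ∃ s ∈ S, t ≠ s ∧ c = ‖g t - g s‖ / |t - s| ^ α}

/-- Membership in the Hölder space `C^{0,α}([-r,0])`. -/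
def MemHol (r α : ℝ) (g : ℝ → Vec n) : Prop :=
  MemC0 r g ∧ BddAbove (hRatios α (Icc (-r) 0) g)

/-- The Hölder norm `max(‖g‖_∞, [g]_α)`. -/
def holderNorm (r α : ℝ) (g : ℝ → Vec n) : ℝ :=
  max (supN r g) (sSup (hRatios α (Icc (-r) 0) g))

/-- Membership in the Sobolev space `W^{1,p}([-r,0])`: `g` is absolutely continuous
on `[-r,0]` (i.e. the integral of an integrable function `d`, which is then its a.e.
derivative) with `d ∈ L^p((-r,0))`. -/
def MemW (r : ℝ) (p : ℝ≥0∞) (g : ℝ → Vec n) : Prop :=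
  ∃ d : ℝ → Vec n, IntegrableOn d (Icc (-r) 0) ∧
    eLpNorm d p (volume.restrict (Ioo (-r) 0)) < ⊤ ∧
    ∀ t ∈ Icc (-r) 0, g t = g (-r) + ∫ s in (-r)..t, d s

/-- The Sobolev norm `‖g‖_∞ + ‖ġ‖_p`; for an absolutely continuous `g` the a.e.
derivative coincides a.e. on `(-r,0)` with `deriv g`. -/
def sobNorm (r : ℝ) (p : ℝ≥0∞) (g : ℝ → Vec n) : ℝ :=
  supN r g + (eLpNorm (deriv g) p (volume.restrict (Ioo (-r) 0))).toReal

/-- The Hölder exponent `1 - 1/p`, with the convention `1/∞ = 0`. -/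
def hexp (p : ℝ≥0∞) : ℝ := 1 - (p.toReal)⁻¹

/-!
On `[-r, T]` the solution is the primitive of the function `D` equal to `ẋ₀` on `(-r, 0]`
and to the continuous function `u ↦ f (x_u)` on `(0, T]`, so `D ∈ Lᵖ` and each segment `x_t`
is absolutely continuous with derivative `D (t + ·)`. Continuity of `t ↦ x_t` is then
uniform continuity of `x` on `[-r, T]` for the sup-norm part, and continuity of translation
in `Lᵖ(ℝ)` (approximate `D` by compactly supported continuous functions) for the derivative
part.
-/

section Translation

variable {E : Type*} [NormedAddCommGroup E] {p : ℝ≥0∞}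

theorem HasCompactSupport.tendsto_eLpNorm_comp_add_sub {ψ : ℝ → E} (hψ : HasCompactSupport ψ)
    (hc : Continuous ψ) (hp : p ≠ ⊤) :
    Tendsto (fun h => eLpNorm (fun u => ψ (h + u) - ψ u) p volume) (𝓝 0) (𝓝 0) := by
  obtain ⟨K, hK⟩ : ∃ K, tsupport ψ ⊆ Metric.closedBall 0 K :=
    hψ.isBounded.subset_closedBall 0
  set s := Metric.closedBall (0 : ℝ) (K + 1)
  have hV : volume s ^ (1 / p.toReal) ≠ ⊤ :=
    ENNReal.rpow_ne_top_of_nonneg (by positivity) measure_closedBall_lt_top.ne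
  have hsupp : ∀ h : ℝ, |h| ≤ 1 → (fun u => ψ (h + u)).support ⊆ s := fun h hh u hu => by
    have := hK (subset_tsupport _ hu)
    simp only [s, Metric.mem_closedBall, dist_zero_right, Real.norm_eq_abs] at this ⊢
    have htri := abs_sub (h + u) h
    rw [add_sub_cancel_left] at htri
    linarith
  have hbound : ∀ c > 0, ∀ᶠ h in 𝓝 (0 : ℝ), eLpNorm (fun u => ψ (h + u) - ψ u) p volume
      ≤ ENNReal.ofReal c * volume s ^ (1 / p.toReal) := by
    intro c hc0
    obtain ⟨δ, hδ, hψδ⟩ := Metric.uniformContinuous_iff.1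
      (hψ.uniformContinuous_of_continuous hc) c hc0
    filter_upwards [Metric.ball_mem_nhds 0 (lt_min hδ one_pos)] with h hh
    rw [Metric.mem_ball, dist_zero_right, Real.norm_eq_abs, lt_min_iff] at hh
    refine eLpNorm_sub_le_of_dist_bdd volume hp Metric.isClosed_closedBall.measurableSet hc0.le
      (fun u => (hψδ ?_).le) (hsupp h hh.2.le) fun u hu => hsupp 0 (by simp) (by simpa using hu)
    simpa [Real.dist_eq] using hh.1
  refine ENNReal.tendsto_nhds_zero.2 fun ε hε => ?_
  have hlim : Tendsto (fun c => ENNReal.ofReal c * volume s ^ (1 / p.toReal)) (𝓝[>] 0) (𝓝 0) := by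
    simpa using ENNReal.Tendsto.mul_const
      ((ENNReal.tendsto_ofReal (tendsto_id (x := 𝓝 (0 : ℝ)))).mono_left nhdsWithin_le_nhds)
      (Or.inr hV)
  obtain ⟨c, hcε, hc0⟩ :=
    ((ENNReal.tendsto_nhds_zero.1 hlim ε hε).and self_mem_nhdsWithin).exists
  exact (hbound c hc0).mono fun h hh => hh.trans hcε

theorem MeasureTheory.MemLp.tendsto_eLpNorm_comp_add_sub [NormedSpace ℝ E] {D : ℝ → E}
    (hD : MemLp D p volume) (hp1 : 1 ≤ p) (hp : p ≠ ⊤) :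
    Tendsto (fun h => eLpNorm (fun u => D (h + u) - D u) p volume) (𝓝 0) (𝓝 0) := by
  refine ENNReal.tendsto_nhds_zero.2 fun ε hε => ?_
  obtain ⟨ψ, hψ, hDψ, hψc, -⟩ :=
    hD.exists_hasCompactSupport_eLpNorm_sub_le hp (ε := ε / 3) (by simp [hε.ne'])
  filter_upwards [ENNReal.tendsto_nhds_zero.1 (hψ.tendsto_eLpNorm_comp_add_sub hψc hp) (ε / 3)
    (by simp [hε.ne'])] with h hh
  have hmp : MeasurePreserving (fun u : ℝ => h + u) volume volume :=
    measurePreserving_add_left volume h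
  have hm : AEStronglyMeasurable (D - ψ) volume :=
    hD.aestronglyMeasurable.sub hψc.aestronglyMeasurable
  have hDψ_shift : eLpNorm ((D - ψ) ∘ fun u => h + u) p volume ≤ ε / 3 := by
    rwa [eLpNorm_comp_measurePreserving hm hmp]
  have hsplit : (fun u => D (h + u) - D u)
      = ((D - ψ) ∘ fun u => h + u) + (fun u => ψ (h + u) - ψ u) - (D - ψ) := by
    ext u; simp only [Function.comp_apply, Pi.add_apply, Pi.sub_apply]; abel
  have hcont : Continuous fun u => ψ (h + u) - ψ u := by fun_prop
  have hm' : AEStronglyMeasurable ((D - ψ) ∘ fun u => h + u) volume :=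
    hm.comp_quasiMeasurePreserving hmp.quasiMeasurePreserving
  calc eLpNorm (fun u => D (h + u) - D u) p volume
      ≤ eLpNorm ((D - ψ) ∘ fun u => h + u) p volume
        + eLpNorm (fun u => ψ (h + u) - ψ u) p volume + eLpNorm (D - ψ) p volume := by
        rw [hsplit]
        refine (eLpNorm_sub_le (hm'.add hcont.aestronglyMeasurable) hm hp1).trans ?_
        gcongr
        exact eLpNorm_add_le hm' hcont.aestronglyMeasurable hp1
    _ ≤ ε / 3 + ε / 3 + ε / 3 := by gcongr
    _ = ε := ENNReal.add_thirds ε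

end Translation

theorem ae_hasDerivAt_of_eq_add_integral {E : Type*} [NormedAddCommGroup E] [NormedSpace ℝ E]
    [CompleteSpace E] {g D : ℝ → E} {a b : ℝ} (hD : LocallyIntegrable D volume)
    (hg : ∀ v ∈ Icc a b, g v = g a + ∫ s in a..v, D s) :
    ∀ᵐ u, u ∈ Ioo a b → HasDerivAt g (D u) u := by
  filter_upwards [LocallyIntegrable.ae_hasDerivAt_integral hD] with u hu hmem
  refine ((hu a).const_add (g a)).congr_of_eventuallyEq ?_
  filter_upwards [isOpen_Ioo.mem_nhds hmem] with v hv
  exact hg v (Ioo_subset_Icc_self hv)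

theorem ENNReal.exists_gt_of_ofReal_lt {t : ℝ} {b : ℝ≥0∞} (h : ENNReal.ofReal t < b) :
    ∃ T, t < T ∧ ENNReal.ofReal T < b := by
  obtain ⟨T, -, htT, hTb⟩ := ENNReal.lt_iff_exists_real_btwn.1 h
  exact ⟨T, (ENNReal.ofReal_lt_ofReal_iff'.1 htT).1, hTb⟩

section Delay

variable {n : ℕ} {r T : ℝ} {p : ℝ≥0∞} {x : ℝ → Vec n}

theorem add_mem_Icc_of_mem_Icc {u s : ℝ} (hu : u ∈ Icc 0 T) (hs : s ∈ Icc (-r) 0) :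
    u + s ∈ Icc (-r) T :=
  ⟨by linarith [hu.1, hs.1], by linarith [hu.2, hs.2]⟩

theorem supN_nonneg (g : ℝ → Vec n) : 0 ≤ supN r g :=
  Real.sSup_nonneg (by rintro _ ⟨s, -, rfl⟩; exact norm_nonneg _)

theorem supN_le {g : ℝ → Vec n} {C : ℝ} (hr : 0 ≤ r) (hg : ∀ s ∈ Icc (-r) 0, ‖g s‖ ≤ C) :
    supN r g ≤ C :=
  csSup_le ⟨_, mem_image_of_mem _ (left_mem_Icc.2 (neg_nonpos.2 hr))⟩
    (by rintro _ ⟨s, hs, rfl⟩; exact hg s hs)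

theorem tendsto_supN_seg_sub (hr : 0 ≤ r) (hx : ContinuousOn x (Icc (-r) T)) {t : ℝ}
    (ht : t ∈ Icc 0 T) :
    Tendsto (fun t' => supN r (seg r x t' - seg r x t)) (𝓝[Icc 0 T] t) (𝓝 0) := by
  refine Metric.tendsto_nhdsWithin_nhds.2 fun ε hε => ?_
  obtain ⟨δ, hδ, hxδ⟩ := Metric.uniformContinuousOn_iff.1
    (isCompact_Icc.uniformContinuousOn_of_continuous hx) (ε / 2) (half_pos hε)
  refine ⟨δ, hδ, fun t' ht' hd => ?_⟩
  rw [Real.dist_eq, sub_zero, abs_of_nonneg (supN_nonneg _)]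
  refine (supN_le hr fun s hs => ?_).trans_lt (half_lt_self hε)
  rw [Pi.sub_apply, ← dist_eq_norm]
  refine (hxδ _ (add_mem_Icc_of_mem_Icc ht' hs) _ (add_mem_Icc_of_mem_Icc ht hs) ?_).le
  simpa [Real.dist_eq] using hd

theorem GoodRHS.continuousOn_comp_seg {f : (ℝ → Vec n) → Vec n} {L : ℝ → ℝ}
    (hf : GoodRHS r f L) (hr : 0 ≤ r) (hx : ContinuousOn x (Icc (-r) T)) :
    ContinuousOn (fun u => f (seg r x u)) (Icc 0 T) := by
  obtain ⟨M, hM⟩ := isCompact_Icc.exists_bound_of_continuousOn hx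
  have hC0 : ∀ u ∈ Icc 0 T, MemC0 r (seg r x u) := fun u hu =>
    hx.comp (by fun_prop) fun s hs => add_mem_Icc_of_mem_Icc hu hs
  have hbd : ∀ u ∈ Icc 0 T, supN r (seg r x u) ≤ M := fun u hu =>
    supN_le hr fun s hs => hM _ (add_mem_Icc_of_mem_Icc hu hs)
  intro t ht
  rw [ContinuousWithinAt, tendsto_iff_norm_sub_tendsto_zero]
  refine squeeze_zero' (Eventually.of_forall fun _ => norm_nonneg _) ?_
    (by simpa using (tendsto_supN_seg_sub hr hx ht).const_mul (L M))
  filter_upwards [self_mem_nhdsWithin] with u hu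
  exact hf.2.2.2.2 M _ _ (hC0 u hu) (hC0 t ht) (hbd u hu) (hbd t ht)

theorem IsSol.continuousOn_Icc {f : (ℝ → Vec n) → Vec n} {x0 : ℝ → Vec n} {b : ℝ≥0∞}
    (hx : IsSol r f x0 x b) (hTb : ENNReal.ofReal T < b) : ContinuousOn x (Icc (-r) T) :=
  hx.1.mono fun _ hu => ⟨hu.1, (ENNReal.ofReal_le_ofReal hu.2).trans_lt hTb⟩

theorem IsSol.exists_eq_add_integral {f : (ℝ → Vec n) → Vec n} {L : ℝ → ℝ} {x0 : ℝ → Vec n}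
    {b : ℝ≥0∞} (hx : IsSol r f x0 x b) (hf : GoodRHS r f L) (hr : 0 ≤ r) (hx0 : MemW r p x0)
    (hTb : ENNReal.ofReal T < b) :
    ∃ D : ℝ → Vec n, MemLp D p volume ∧ Integrable D volume ∧
      ∀ v ∈ Icc (-r) T, x v = x (-r) + ∫ s in (-r)..v, D s := by
  obtain ⟨d0, hd0, hd0p, hd0eq⟩ := hx0
  have hφ := hf.continuousOn_comp_seg hr (hx.continuousOn_Icc hTb)
  set φ := fun u => f (seg r x u)
  set D := (Ioc (-r) 0).indicator d0 + (Ioc 0 T).indicator φ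
  have hd0' : IntegrableOn d0 (Ioc (-r) 0) := hd0.mono_set Ioc_subset_Icc_self
  have hφ' : IntegrableOn φ (Ioc 0 T) := hφ.integrableOn_Icc.mono_set Ioc_subset_Icc_self
  have hDi : Integrable D volume := (hd0'.integrable_indicator measurableSet_Ioc).add
    (hφ'.integrable_indicator measurableSet_Ioc)
  have hDp : MemLp D p volume := by
    refine MemLp.add ((memLp_indicator_iff_restrict measurableSet_Ioc).2
      ⟨hd0'.aestronglyMeasurable, ?_⟩) ((memLp_indicator_iff_restrict measurableSet_Ioc).2 ?_)
    · rwa [← Measure.restrict_congr_set Ioo_ae_eq_Ioc]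
    · obtain ⟨C, hC⟩ := isCompact_Icc.exists_bound_of_continuousOn hφ
      exact MemLp.of_bound hφ'.aestronglyMeasurable C
        ((ae_restrict_mem measurableSet_Ioc).mono fun u hu => hC u (Ioc_subset_Icc_self hu))
  have hint_eq {a c : ℝ} {g : ℝ → Vec n} (hac : a ≤ c) (hg : ∀ u ∈ Ioc a c, D u = g u) :
      ∫ s in a..c, D s = ∫ s in a..c, g s :=
    intervalIntegral.integral_congr_ae (Eventually.of_forall fun u hu =>
      hg u (by rwa [uIoc_of_le hac] at hu))
  have hneg : ∀ v ∈ Icc (-r) 0, x v = x (-r) + ∫ s in (-r)..v, D s := by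
    intro v hv
    rw [hx.2.1 hv, hx.2.1 (left_mem_Icc.2 (neg_nonpos.2 hr)), hd0eq v hv]
    refine congrArg _ (hint_eq hv.1 fun u hu => ?_).symm
    simp [D, hu.1, hu.2.trans hv.2, not_lt.2 (hu.2.trans hv.2)]
  refine ⟨D, hDp, hDi, fun v hv => ?_⟩
  rcases le_or_gt v 0 with hv0 | hv0
  · exact hneg v ⟨hv.1, hv0⟩
  have hpos : ∫ s in (0 : ℝ)..v, φ s = ∫ s in (0 : ℝ)..v, D s :=
    (hint_eq hv0.le fun u hu => by simp [D, hu.1, hu.2.trans hv.2, not_le.2 hu.1]).symm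
  rw [hx.2.2 v hv0.le ((ENNReal.ofReal_le_ofReal hv.2).trans_lt hTb),
    hneg 0 ⟨by linarith, le_rfl⟩, hpos, add_assoc,
    intervalIntegral.integral_add_adjacent_intervals hDi.intervalIntegrable
      hDi.intervalIntegrable]

theorem memW_seg {D : ℝ → Vec n} (hDp : MemLp D p volume) (hDi : Integrable D volume)
    (hrep : ∀ v ∈ Icc (-r) T, x v = x (-r) + ∫ s in (-r)..v, D s) {t : ℝ} (ht : t ∈ Icc 0 T) :
    MemW r p (seg r x t) := by
  have hmp : MeasurePreserving (fun s : ℝ => t + s) volume volume :=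
    measurePreserving_add_left volume t
  refine ⟨fun s => D (t + s), (hDi.comp_add_left t).integrableOn, ?_, fun s hs => ?_⟩
  · calc eLpNorm (fun s => D (t + s)) p (volume.restrict (Ioo (-r) 0))
        ≤ eLpNorm (D ∘ fun s => t + s) p volume :=
          eLpNorm_mono_measure _ Measure.restrict_le_self
      _ = eLpNorm D p volume := eLpNorm_comp_measurePreserving hDp.1 hmp
      _ < ⊤ := hDp.2
  · have hr : 0 ≤ r := by linarith [hs.1, hs.2]
    rw [intervalIntegral.integral_comp_add_left, seg, seg,
      hrep _ (add_mem_Icc_of_mem_Icc ht hs),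
      hrep _ (add_mem_Icc_of_mem_Icc ht (left_mem_Icc.2 (neg_nonpos.2 hr))), add_assoc,
      intervalIntegral.integral_add_adjacent_intervals hDi.intervalIntegrable
        hDi.intervalIntegrable]

theorem eLpNorm_deriv_seg_sub_le {D : ℝ → Vec n} (hD : AEStronglyMeasurable D volume)
    (hder : ∀ᵐ u, u ∈ Ioo (-r) T → HasDerivAt x (D u) u) {t t' : ℝ} (ht : t ∈ Icc 0 T)
    (ht' : t' ∈ Icc 0 T) :
    eLpNorm (deriv (seg r x t' - seg r x t)) p (volume.restrict (Ioo (-r) 0))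
      ≤ eLpNorm (fun u => D (t' - t + u) - D u) p volume := by
  have hshift (a : ℝ) : ∀ᵐ s, a + s ∈ Ioo (-r) T → HasDerivAt x (D (a + s)) (a + s) :=
    (measurePreserving_add_left volume a).quasiMeasurePreserving.ae hder
  have hseg : ∀ᵐ s ∂volume.restrict (Ioo (-r) 0),
      deriv (seg r x t' - seg r x t) s = D (t' + s) - D (t + s) := by
    filter_upwards [ae_restrict_of_ae (hshift t), ae_restrict_of_ae (hshift t'),
      ae_restrict_mem measurableSet_Ioo] with s hs hs' hmem
    have hin {a : ℝ} (ha : a ∈ Icc 0 T) : a + s ∈ Ioo (-r) T :=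
      ⟨by linarith [ha.1, hmem.1], by linarith [ha.2, hmem.2]⟩
    exact (((hs' (hin ht')).comp_const_add t' s).sub
      ((hs (hin ht)).comp_const_add t s)).deriv
  have hmp : MeasurePreserving (fun s : ℝ => t + s) volume volume :=
    measurePreserving_add_left volume t
  have hD' : AEStronglyMeasurable (fun u => D (t' - t + u) - D u) volume :=
    (hD.comp_quasiMeasurePreserving
      (measurePreserving_add_left volume (t' - t)).quasiMeasurePreserving).sub hD
  calc eLpNorm (deriv (seg r x t' - seg r x t)) p (volume.restrict (Ioo (-r) 0))
      = eLpNorm ((fun u => D (t' - t + u) - D u) ∘ fun s => t + s) p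
          (volume.restrict (Ioo (-r) 0)) := by
        refine eLpNorm_congr_ae (hseg.mono fun s hs => ?_)
        rw [hs, Function.comp_apply, show t' - t + (t + s) = t' + s by ring]
    _ ≤ eLpNorm ((fun u => D (t' - t + u) - D u) ∘ fun s => t + s) p volume :=
        eLpNorm_mono_measure _ Measure.restrict_le_self
    _ = eLpNorm (fun u => D (t' - t + u) - D u) p volume :=
        eLpNorm_comp_measurePreserving hD' hmp

theorem tendsto_sobNorm_seg_sub (hr : 0 ≤ r) (hp1 : 1 ≤ p) (hp : p ≠ ⊤)
    (hx : ContinuousOn x (Icc (-r) T)) {D : ℝ → Vec n} (hD : MemLp D p volume)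
    (hder : ∀ᵐ u, u ∈ Ioo (-r) T → HasDerivAt x (D u) u) {t : ℝ} (ht : t ∈ Icc 0 T) :
    Tendsto (fun t' => sobNorm r p (seg r x t' - seg r x t)) (𝓝[Icc 0 T] t) (𝓝 0) := by
  have hshift : Tendsto (fun t' => t' - t) (𝓝[Icc 0 T] t) (𝓝 0) := by
    simpa using ((continuous_sub_right t).tendsto t).mono_left nhdsWithin_le_nhds
  have hderiv : Tendsto
      (fun t' => eLpNorm (deriv (seg r x t' - seg r x t)) p (volume.restrict (Ioo (-r) 0)))
      (𝓝[Icc 0 T] t) (𝓝 0) := by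
    refine tendsto_of_tendsto_of_tendsto_of_le_of_le' tendsto_const_nhds
      ((hD.tendsto_eLpNorm_comp_add_sub hp1 hp).comp hshift)
      (Eventually.of_forall fun _ => zero_le) ?_
    filter_upwards [self_mem_nhdsWithin] with t' ht'
    exact eLpNorm_deriv_seg_sub_le hD.1 hder ht ht'
  simpa [sobNorm] using (tendsto_supN_seg_sub hr hx ht).add
    ((ENNReal.tendsto_toReal ENNReal.zero_ne_top).comp hderiv)

end Delay

theorem stmt9_general (n : ℕ) (r : ℝ) (hr : 0 < r)
    (f : (ℝ → Vec n) → Vec n) (L : ℝ → ℝ) (hf : GoodRHS r f L)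
    (p : ℝ≥0∞) (hp : 1 < p) (hp' : p ≠ ⊤)
    (x0 x : ℝ → Vec n) (hx0 : MemW r p x0)
    (b : ℝ≥0∞) (hx : IsSol r f x0 x b) :
    (∀ t : ℝ, 0 ≤ t → ENNReal.ofReal t < b → MemW r p (seg r x t)) ∧
    (∀ t : ℝ, 0 ≤ t → ENNReal.ofReal t < b → ∀ ε : ℝ, 0 < ε → ∃ δ : ℝ, 0 < δ ∧
      ∀ t' : ℝ, 0 ≤ t' → ENNReal.ofReal t' < b → |t' - t| < δ →
        sobNorm r p (seg r x t' - seg r x t) < ε) := by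
  refine ⟨fun t ht htb => ?_, fun t ht htb ε hε => ?_⟩
  · obtain ⟨T, htT, hTb⟩ := ENNReal.exists_gt_of_ofReal_lt htb
    obtain ⟨D, hDp, hDi, hrep⟩ := hx.exists_eq_add_integral hf hr.le hx0 hTb
    exact memW_seg hDp hDi hrep ⟨ht, htT.le⟩
  obtain ⟨T, htT, hTb⟩ := ENNReal.exists_gt_of_ofReal_lt htb
  obtain ⟨D, hDp, hDi, hrep⟩ := hx.exists_eq_add_integral hf hr.le hx0 hTb
  obtain ⟨δ, hδ, hclose⟩ := Metric.tendsto_nhdsWithin_nhds.1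
    (tendsto_sobNorm_seg_sub hr.le hp.le hp' (hx.continuousOn_Icc hTb) hDp
      (ae_hasDerivAt_of_eq_add_integral hDi.locallyIntegrable hrep) ⟨ht, htT.le⟩) ε hε
  refine ⟨min δ (T - t), lt_min hδ (sub_pos.2 htT), fun t' ht' _ hd => ?_⟩
  have ht'T : t' ≤ T := by linarith [(abs_lt.1 (hd.trans_le (min_le_right _ _))).2]
  have hdist := hclose ⟨ht', ht'T⟩ (hd.trans_le (min_le_left _ _))
  rw [Real.dist_eq, sub_zero] at hdist
  exact lt_of_abs_lt hdist

/-- **Lemma 1.** For `p ∈ (1,∞)` and `x0 ∈ W^{1,p}`, along any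
solution on `[0,b)` the segments remain in `W^{1,p}` and the map `t ↦ x_t` is
continuous from `[0,b)` into `W^{1,p}`. -/
theorem stmt9 (n : ℕ) (hn : 1 ≤ n) (r : ℝ) (hr : 0 < r)
    (f : (ℝ → Vec n) → Vec n) (L : ℝ → ℝ) (hf : GoodRHS r f L)
    (p : ℝ≥0∞) (hp : 1 < p) (hp' : p ≠ ⊤)
    (x0 x : ℝ → Vec n) (hx0 : MemW r p x0)
    (b : ℝ≥0∞) (hb : 0 < b) (hx : IsSol r f x0 x b) :
    (∀ t : ℝ, 0 ≤ t → ENNReal.ofReal t < b → MemW r p (seg r x t)) ∧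
    (∀ t : ℝ, 0 ≤ t → ENNReal.ofReal t < b → ∀ ε : ℝ, 0 < ε → ∃ δ : ℝ, 0 < δ ∧
      ∀ t' : ℝ, 0 ≤ t' → ENNReal.ofReal t' < b → |t' - t| < δ →
        sobNorm r p (seg r x t' - seg r x t) < ε) :=
  stmt9_general n r hr f L hf p hp hp' x0 x hx0 b hx
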